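/- Let (Mᵢ)_{i∈ℕ} be independent real random variables with E Mᵢ = 0 and E|Mᵢ|^p < ∞ for some 1 ≤ p ≤ 2. Then for every n, E|∑_{i=1}^n Mᵢ|^p ≤ 2 ∑_{i=1}^n E|Mᵢ|^p. -/

import Mathlib

/-!
For `1 ≤ p ≤ 2` the function `|x| ^ p` is `C¹` away from the origin with derivative
`φ(x) = p sign(x) |x| ^ (p - 1)`, and `φ` is `(p - 1)`-Hölder on each half-line. This gives the
one-sided Taylor bound `|x + y| ^ p ≤ |x| ^ p + φ(x) y + 2 |y| ^ p`. Taking `x = S_n` and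
`y = M_n`, the linear term `φ(S_n) M_n` has expectation `E φ(S_n) · E M_n = 0` by independence, so
`E |S_{n+1}| ^ p ≤ E |S_n| ^ p + 2 E |M_n| ^ p`, and the theorem follows by induction on `n`.
-/

open MeasureTheory ProbabilityTheory

namespace Real

lemma sign_monotone : Monotone Real.sign := by
  intro a b hab
  simp only [Real.sign]
  split_ifs <;> linarith

lemma measurable_sign : Measurable Real.sign := sign_monotone.measurable

lemma abs_rpow_sub_rpow_le {a b q : ℝ} (ha : 0 ≤ a) (hb : 0 ≤ b) (hq0 : 0 ≤ q)
    (hq1 : q ≤ 1) : |a ^ q - b ^ q| ≤ |a - b| ^ q := by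
  wlog hba : b ≤ a generalizing a b
  · rw [abs_sub_comm, abs_sub_comm a]
    exact this hb ha (le_of_not_ge hba)
  have hsub : a ^ q ≤ b ^ q + (a - b) ^ q := by
    simpa using rpow_add_le_add_rpow hb (sub_nonneg.2 hba) hq0 hq1
  rw [abs_of_nonneg (sub_nonneg.2 (rpow_le_rpow hb hba hq0)), abs_of_nonneg (sub_nonneg.2 hba)]
  linarith

lemma rpow_le_rpow_add_mul_sub_add_mul_abs_sub_rpow {a b p : ℝ} (ha : 0 ≤ a) (hb : 0 ≤ b)
    (hp : 1 ≤ p) (hp2 : p ≤ 2) :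
    b ^ p ≤ a ^ p + p * a ^ (p - 1) * (b - a) + p * |b - a| ^ p := by
  set f : ℝ → ℝ := fun z => z ^ p - p * a ^ (p - 1) * z
  have hderiv : ∀ z ∈ Set.uIcc a b,
      HasDerivWithinAt f (p * z ^ (p - 1) - p * a ^ (p - 1)) (Set.uIcc a b) z := fun z _ =>
    ((hasDerivAt_rpow_const (Or.inr hp)).sub ((hasDerivAt_id z).const_mul _)
      |>.congr_deriv (by ring)).hasDerivWithinAt
  have hbound : ∀ z ∈ Set.uIcc a b,
      ‖p * z ^ (p - 1) - p * a ^ (p - 1)‖ ≤ p * |b - a| ^ (p - 1) := by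
    intro z hz
    have hz0 : 0 ≤ z := le_trans (le_min ha hb) hz.1
    rw [norm_eq_abs, ← mul_sub, abs_mul, abs_of_nonneg (by linarith : (0 : ℝ) ≤ p)]
    gcongr
    calc |z ^ (p - 1) - a ^ (p - 1)| ≤ |z - a| ^ (p - 1) :=
          abs_rpow_sub_rpow_le hz0 ha (by linarith) (by linarith)
      _ ≤ |b - a| ^ (p - 1) :=
          rpow_le_rpow (abs_nonneg _) (Set.abs_sub_left_of_mem_uIcc hz) (by linarith)
  have hmvt := (convex_uIcc a b).norm_image_sub_le_of_norm_hasDerivWithin_le hderiv hbound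
    Set.left_mem_uIcc Set.right_mem_uIcc
  have hpow : |b - a| ^ (p - 1) * |b - a| = |b - a| ^ p := by
    rw [← rpow_add_one' (abs_nonneg _) (by linarith), sub_add_cancel]
  rw [norm_eq_abs, norm_eq_abs, mul_assoc, hpow] at hmvt
  have := le_abs_self (f b - f a)
  simp only [f] at this
  linarith

lemma rpow_add_mul_rpow_sub_one_le {x s p : ℝ} (hx : 0 < x) (hs : -x ≤ s) (hp : 1 ≤ p) :
    x ^ p + p * x ^ (p - 1) * s ≤ (x + s) ^ p := by
  have hsx : -1 ≤ s / x := by rwa [le_div_iff₀ hx, neg_one_mul]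
  calc x ^ p + p * x ^ (p - 1) * s = x ^ p * (1 + p * (s / x)) := by
        rw [rpow_sub_one hx.ne']; field_simp
    _ ≤ x ^ p * (1 + s / x) ^ p := by gcongr; exact one_add_mul_self_le_rpow_one_add hsx hp
    _ = (x + s) ^ p := by
        rw [← mul_rpow hx.le (by linarith), mul_add, mul_one, mul_div_cancel₀ _ hx.ne']

end Real

open Real

noncomputable def absRpowDeriv (p x : ℝ) : ℝ := p * Real.sign x * |x| ^ (p - 1)

lemma absRpowDeriv_neg (p x : ℝ) : absRpowDeriv p (-x) = -absRpowDeriv p x := by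
  simp only [absRpowDeriv, sign_neg, abs_neg]; ring

lemma measurable_absRpowDeriv (p : ℝ) : Measurable (absRpowDeriv p) :=
  (measurable_const.mul measurable_sign).mul (measurable_id.abs.pow_const _)

lemma abs_absRpowDeriv_le {p : ℝ} (hp : 0 ≤ p) (x : ℝ) :
    |absRpowDeriv p x| ≤ p * |x| ^ (p - 1) := by
  rw [absRpowDeriv, abs_mul, abs_mul, abs_of_nonneg hp,
    abs_of_nonneg (rpow_nonneg (abs_nonneg x) _)]
  have hsign : |Real.sign x| ≤ 1 := by
    rcases sign_apply_eq x with h | h | h <;> rw [h] <;> norm_num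
  calc p * |Real.sign x| * |x| ^ (p - 1) ≤ p * 1 * |x| ^ (p - 1) := by gcongr
    _ = p * |x| ^ (p - 1) := by ring

lemma abs_add_rpow_le_of_pos {p x : ℝ} (hp : 1 ≤ p) (hp2 : p ≤ 2) (hx : 0 < x) (y : ℝ) :
    |x + y| ^ p ≤ |x| ^ p + absRpowDeriv p x * y + 2 * |y| ^ p := by
  rw [absRpowDeriv, sign_of_pos hx, abs_of_pos hx, mul_one]
  have hyp : 0 ≤ |y| ^ p := by positivity
  rcases le_or_gt 0 (x + y) with hxy | hxy
  · have := rpow_le_rpow_add_mul_sub_add_mul_abs_sub_rpow hx.le hxy hp hp2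
    rw [abs_of_nonneg hxy]
    simp only [add_sub_cancel_left] at this
    nlinarith
  -- when `x + y < 0`, the tangent line at `x` and superadditivity of `t ↦ t ^ p`
  -- both bound `|y| ^ p = (x + s) ^ p` from below
  · obtain ⟨s, rfl⟩ : ∃ s, y = -(x + s) := ⟨-y - x, by ring⟩
    have hs0 : 0 < s := by linarith
    rw [show x + -(x + s) = -s by ring, abs_neg, abs_neg, abs_of_pos hs0,
      abs_of_pos (by linarith : 0 < x + s)]
    have htan := rpow_add_mul_rpow_sub_one_le hx (by linarith : -x ≤ s) hp
    have hsup := add_rpow_le_rpow_add hx.le hs0.le hp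
    have hxx : x ^ (p - 1) * x = x ^ p := by
      rw [rpow_sub_one hx.ne', div_mul_cancel₀ _ hx.ne']
    have : 0 ≤ x ^ p := by positivity
    nlinarith

lemma abs_add_rpow_le {p : ℝ} (hp : 1 ≤ p) (hp2 : p ≤ 2) (x y : ℝ) :
    |x + y| ^ p ≤ |x| ^ p + absRpowDeriv p x * y + 2 * |y| ^ p := by
  rcases lt_trichotomy x 0 with hx | rfl | hx
  · have := abs_add_rpow_le_of_pos hp hp2 (neg_pos.2 hx) (-y)
    rwa [← neg_add, abs_neg, abs_neg, abs_neg, absRpowDeriv_neg, neg_mul_neg] at this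
  · have : 0 ≤ |y| ^ p := by positivity
    simp only [absRpowDeriv, sign_zero, zero_add, abs_zero, zero_rpow (by linarith : p ≠ 0),
      mul_zero, zero_mul]
    linarith
  · exact abs_add_rpow_le_of_pos hp hp2 hx y

section Probability

variable {Ω : Type*} [MeasurableSpace Ω] {μ : Measure Ω}

lemma integrable_abs_rpow_iff_memLp {f : Ω → ℝ} {p : ℝ} (hf : AEStronglyMeasurable f μ)
    (hp : 0 < p) : Integrable (fun ω => |f ω| ^ p) μ ↔ MemLp f (ENNReal.ofReal p) μ := by
  simpa [ENNReal.toReal_ofReal hp.le] using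
    integrable_norm_rpow_iff hf (ENNReal.ofReal_pos.2 hp).ne' ENNReal.ofReal_ne_top

lemma integral_abs_add_rpow_le [IsFiniteMeasure μ] {X Y : Ω → ℝ}
    (hX : AEStronglyMeasurable X μ) (hY : AEStronglyMeasurable Y μ) (hind : IndepFun X Y μ)
    {p : ℝ} (hp : 1 ≤ p) (hp2 : p ≤ 2)
    (hXp : Integrable (fun ω => |X ω| ^ p) μ) (hYp : Integrable (fun ω => |Y ω| ^ p) μ)
    (hYmean : ∫ ω, Y ω ∂μ = 0) :
    ∫ ω, |X ω + Y ω| ^ p ∂μ ≤ ∫ ω, |X ω| ^ p ∂μ + 2 * ∫ ω, |Y ω| ^ p ∂μ := by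
  have hp0 : 0 < p := by linarith
  have hXp' : Integrable (fun ω => |X ω| ^ (p - 1)) μ := by
    simpa using integrable_norm_rpow_of_le hX (by linarith) hp0.le (by linarith)
      (by simpa using hXp)
  have hY1 : Integrable Y μ :=
    ((integrable_abs_rpow_iff_memLp hY hp0).1 hYp).integrable (by simpa using hp)
  have hφX : Integrable (fun ω => absRpowDeriv p (X ω)) μ :=
    (hXp'.const_mul p).mono'
      ((measurable_absRpowDeriv p).comp_aemeasurable hX.aemeasurable).aestronglyMeasurable
      (ae_of_all _ fun ω => abs_absRpowDeriv_le hp0.le _)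
  have hindφ : IndepFun (fun ω => absRpowDeriv p (X ω)) Y μ :=
    hind.comp (measurable_absRpowDeriv p) measurable_id
  have hcross : ∫ ω, absRpowDeriv p (X ω) * Y ω ∂μ = 0 := by
    rw [hindφ.integral_fun_mul_eq_mul_integral hφX.aestronglyMeasurable hY, hYmean, mul_zero]
  have hsum : Integrable (fun ω => |X ω + Y ω| ^ p) μ :=
    (integrable_abs_rpow_iff_memLp (hX.add hY) hp0).2
      (((integrable_abs_rpow_iff_memLp hX hp0).1 hXp).add
        ((integrable_abs_rpow_iff_memLp hY hp0).1 hYp))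
  have hcrossInt : Integrable (fun ω => absRpowDeriv p (X ω) * Y ω) μ :=
    hindφ.integrable_mul hφX hY1
  have hfirst : Integrable (fun ω => |X ω| ^ p + absRpowDeriv p (X ω) * Y ω) μ :=
    hXp.add hcrossInt
  calc ∫ ω, |X ω + Y ω| ^ p ∂μ
      ≤ ∫ ω, (|X ω| ^ p + absRpowDeriv p (X ω) * Y ω + 2 * |Y ω| ^ p) ∂μ :=
        integral_mono hsum (hfirst.add (hYp.const_mul 2))
          fun ω => abs_add_rpow_le hp hp2 (X ω) (Y ω)
    _ = ∫ ω, |X ω| ^ p ∂μ + 2 * ∫ ω, |Y ω| ^ p ∂μ := by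
        rw [integral_add hfirst (hYp.const_mul 2), integral_add hXp hcrossInt,
          integral_const_mul, hcross, add_zero]

end Probability

theorem stmt_19 {Ω : Type*} [MeasurableSpace Ω] (P : Measure Ω) [IsProbabilityMeasure P]
    (M : ℕ → Ω → ℝ) (hmeas : ∀ i, Measurable (M i))
    (hindep : iIndepFun M P)
    (p : ℝ) (hp : 1 ≤ p) (hp2 : p ≤ 2)
    (hmom : ∀ i, Integrable (fun ω => |M i ω| ^ p) P)
    (hmean : ∀ i, ∫ ω, M i ω ∂P = 0) :
    ∀ n : ℕ, ∫ ω, |∑ i ∈ Finset.range n, M i ω| ^ p ∂P ≤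
      2 * ∑ i ∈ Finset.range n, ∫ ω, |M i ω| ^ p ∂P := by
  have hp0 : 0 < p := by linarith
  intro n
  induction n with
  | zero => simp [zero_rpow hp0.ne']
  | succ n ih =>
    have hSmeas : AEStronglyMeasurable (fun ω => ∑ i ∈ Finset.range n, M i ω) P :=
      (Finset.measurable_sum _ fun i _ => hmeas i).aestronglyMeasurable
    have hSmom : Integrable (fun ω => |∑ i ∈ Finset.range n, M i ω| ^ p) P :=
      (integrable_abs_rpow_iff_memLp hSmeas hp0).2 <| memLp_finsetSum _ fun i _ =>
        (integrable_abs_rpow_iff_memLp (hmeas i).aestronglyMeasurable hp0).1 (hmom i)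
    have hind : IndepFun (fun ω => ∑ i ∈ Finset.range n, M i ω) (M n) P := by
      simpa [← Finset.sum_apply] using hindep.indepFun_sum_range_succ hmeas n
    simp only [Finset.sum_range_succ]
    linarith [integral_abs_add_rpow_le hSmeas (hmeas n).aestronglyMeasurable hind hp hp2 hSmom
      (hmom n) (hmean n)]
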